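/- Let X(t) = σ G(t)^H Z where Z is standard normal independent of G(t) ~ IG(αt, β), with σ, α, β, t > 0 and H ∈ (0,1). Then for every q > 0, E|X(t)|^q = c_q √(2/π) · α · (α/β)^{qH - 1/2} · t^{qH + 1/2} · exp(αβt) · K_{1/2 - qH}(αβt), where c_q = √(2^q/π) σ^q Γ((1+q)/2). -/
import Mathlib


open MeasureTheory Real Set

/-- Integral representation of the modified Bessel function of the third kind. -/
noncomputable def besselK (ν ω : ℝ) : ℝ :=
  (1/2) * ∫ x in Ioi (0:ℝ), x ^ (ν - 1) * Real.exp (-(ω/2) * (x + x⁻¹))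

/-- The inverse Gaussian density IG(a, b). -/
noncomputable def igPdf (a b x : ℝ) : ℝ :=
  (2 * π) ^ (-(1:ℝ)/2) * a * x ^ (-(3:ℝ)/2) *
    Real.exp (a * b - (1/2) * (a^2 * x⁻¹ + b^2 * x))

-- auxiliary lemmas
lemma gauss_abs_moment (q : ℝ) (hq : 0 < q) :
    (∫ z : ℝ, |z| ^ q * ((2 * π) ^ (-(1:ℝ)/2) * Real.exp (-z^2 / 2)))
      = Real.sqrt (2 ^ q / π) * Real.Gamma ((1 + q) / 2) := by
  have hπ := pi_pos
  have h1 : (∫ z : ℝ, |z| ^ q * ((2 * π) ^ (-(1:ℝ)/2) * Real.exp (-z^2 / 2)))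
      = (2 * π) ^ (-(1:ℝ)/2) *
        ∫ z : ℝ, |z| ^ q * Real.exp (-(1/2) * |z| ^ (2:ℝ)) := by
    rw [← integral_const_mul]
    congr 1; ext z
    have h2 : |z| ^ (2:ℝ) = z ^ 2 := by
      rw [show ((2:ℝ)) = ((2:ℕ):ℝ) by norm_num, rpow_natCast, sq_abs]
    rw [h2]; ring_nf
  have habs : (∫ z : ℝ, |z| ^ q * Real.exp (-(1/2) * |z| ^ (2:ℝ)))
      = 2 * ∫ x in Ioi (0:ℝ), x ^ q * Real.exp (-(1/2) * x ^ (2:ℝ)) := by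
    simpa using integral_comp_abs (f := fun x => x ^ q * Real.exp (-(1/2) * x ^ (2:ℝ)))
  rw [h1, habs,
    integral_rpow_mul_exp_neg_mul_rpow two_pos (by linarith) (by norm_num : (0:ℝ) < 1/2)]
  have h3 : ((1:ℝ)/2) ^ (-(q+1)/2) = (2:ℝ) ^ ((q+1)/2) := by
    rw [one_div, Real.inv_rpow (by norm_num), ← Real.rpow_neg (by norm_num)]
    congr 1; ring
  rw [h3, Real.sqrt_eq_rpow, Real.div_rpow (by positivity) hπ.le,
    ← Real.rpow_mul (by norm_num : (0:ℝ) ≤ 2),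
    Real.mul_rpow (by norm_num : (0:ℝ) ≤ 2) hπ.le,
    show (1 + q)/2 = (q + 1)/2 by ring]
  have h4 : (2:ℝ) ^ ((-1:ℝ)/2) * 2 ^ ((q+1)/2) = 2 ^ (q * (1/2)) := by
    rw [← Real.rpow_add two_pos]; congr 1; ring
  rw [← h4, show ((-1:ℝ)/2) = -(1/2) by ring, Real.rpow_neg hπ.le]
  have hπ2 : π ^ ((1:ℝ)/2) ≠ 0 := by positivity
  field_simp

theorem tst : True := trivial

lemma ig_moment (a b s : ℝ) (ha : 0 < a) (hb : 0 < b) :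
    (∫ y in Ioi (0:ℝ), y ^ s * igPdf a b y)
      = Real.sqrt (2/π) * a * (a/b) ^ (s - 1/2) * Real.exp (a*b)
        * besselK (1/2 - s) (a*b) := by
  have hπ := pi_pos
  set g : ℝ → ℝ := fun y => y ^ (s - 3/2) * Real.exp (-(1/2) * (a^2 * y⁻¹ + b^2 * y)) with hg
  have step1 : (∫ y in Ioi (0:ℝ), y ^ s * igPdf a b y)
      = ((2*π) ^ (-(1:ℝ)/2) * a * Real.exp (a*b)) * ∫ y in Ioi (0:ℝ), g y := by
    rw [← integral_const_mul]
    refine setIntegral_congr_fun measurableSet_Ioi fun y hy => ?_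
    have hy0 : (0:ℝ) < y := hy
    have hexp : Real.exp (a*b - (1/2) * (a^2 * y⁻¹ + b^2 * y))
        = Real.exp (a*b) * Real.exp (-(1/2) * (a^2 * y⁻¹ + b^2 * y)) := by
      rw [← Real.exp_add]; congr 1; ring
    have hpow : y ^ s * y ^ (-(3:ℝ)/2) = y ^ (s - 3/2) := by
      rw [← Real.rpow_add hy0]; congr 1; ring
    simp only [igPdf, hg]
    rw [hexp, ← hpow]; ring
  have step2 : (∫ y in Ioi (0:ℝ), g y)
      = ∫ x in Ioi (0:ℝ), x ^ (-s - 1/2) * Real.exp (-(1/2) * (a^2 * x + b^2 * x⁻¹)) := by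
    rw [← integral_comp_rpow_Ioi g (show (-1:ℝ) ≠ 0 by norm_num)]
    refine setIntegral_congr_fun measurableSet_Ioi fun x hx => ?_
    have hx0 : (0:ℝ) < x := hx
    have hinv : x ^ ((-1:ℝ)) = x⁻¹ := by rw [Real.rpow_neg hx0.le, Real.rpow_one]
    simp only [smul_eq_mul, hinv, abs_neg, abs_one, hg, inv_inv]
    rw [Real.inv_rpow hx0.le, ← Real.rpow_neg hx0.le]
    have hcomb : x ^ ((-1:ℝ) - 1) * x ^ (-(s - 3/2)) = x ^ (-s - 1/2) := by
      rw [← Real.rpow_add hx0]; congr 1; ring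
    rw [one_mul, ← mul_assoc, hcomb]
  have hc : (0:ℝ) < b / a := div_pos hb ha
  have step3 : (∫ x in Ioi (0:ℝ), x ^ (-s - 1/2) * Real.exp (-(1/2) * (a^2 * x + b^2 * x⁻¹)))
      = (b/a) * ((b/a) ^ (-s - 1/2) *
          ∫ u in Ioi (0:ℝ), u ^ ((1/2 - s) - 1) * Real.exp (-(a*b/2) * (u + u⁻¹))) := by
    have A := integral_comp_mul_left_Ioi
      (fun x : ℝ => x ^ (-s - 1/2) * Real.exp (-(1/2) * (a^2 * x + b^2 * x⁻¹))) 0 hc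
    simp only [mul_zero, smul_eq_mul] at A
    have A2 : (∫ x in Ioi (0:ℝ), x ^ (-s - 1/2) * Real.exp (-(1/2) * (a^2 * x + b^2 * x⁻¹)))
        = (b/a) * ∫ x in Ioi (0:ℝ), ((b/a)*x) ^ (-s - 1/2)
            * Real.exp (-(1/2) * (a^2 * ((b/a)*x) + b^2 * ((b/a)*x)⁻¹)) := by
      rw [A, ← mul_assoc, mul_inv_cancel₀ hc.ne', one_mul]
    rw [A2]
    congr 1
    rw [← integral_const_mul]
    refine setIntegral_congr_fun measurableSet_Ioi fun x hx => ?_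
    have hx0 : (0:ℝ) < x := hx
    have h1 : ((b/a) * x) ^ (-s - 1/2) = (b/a) ^ (-s - 1/2) * x ^ (-s - 1/2) :=
      Real.mul_rpow hc.le hx0.le
    have h2 : -(1/2) * (a^2 * ((b/a) * x) + b^2 * ((b/a) * x)⁻¹)
        = -(a*b/2) * (x + x⁻¹) := by
      field_simp
    rw [h1, h2, show ((1:ℝ)/2 - s) - 1 = -s - 1/2 by ring]
    ring
  have hK : (∫ u in Ioi (0:ℝ), u ^ ((1/2 - s) - 1) * Real.exp (-(a*b/2) * (u + u⁻¹)))
      = 2 * besselK (1/2 - s) (a*b) := by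
    rw [besselK]; ring
  rw [step1, step2, step3, hK]
  have e2 : (b/a) * (b/a) ^ (-s - 1/2) = (b/a) ^ (-(s - 1/2)) := by
    nth_rewrite 1 [← Real.rpow_one (b/a)]
    rw [← Real.rpow_add hc]; congr 1; ring
  have e1 : (a/b) ^ (s - 1/2) = (b/a) ^ (-(s - 1/2)) := by
    rw [show a/b = (b/a)⁻¹ by rw [inv_div], Real.inv_rpow hc.le, ← Real.rpow_neg hc.le]
  have h2 : (2:ℝ) ^ (-((1:ℝ)/2)) * 2 ^ (1:ℝ) = 2 ^ ((1:ℝ)/2) := by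
    rw [← Real.rpow_add two_pos]; norm_num
  have hconst : (2*π) ^ (-(1:ℝ)/2) * 2 = Real.sqrt (2/π) := by
    calc (2*π) ^ (-(1:ℝ)/2) * 2
        = 2 ^ (-((1:ℝ)/2)) * π ^ (-((1:ℝ)/2)) * 2 ^ (1:ℝ) := by
          rw [show (-(1:ℝ)/2) = -((1:ℝ)/2) by norm_num,
            Real.mul_rpow (by norm_num : (0:ℝ) ≤ 2) hπ.le, Real.rpow_one]
      _ = 2 ^ ((1:ℝ)/2) * π ^ (-((1:ℝ)/2)) := by rw [← h2]; ring
      _ = Real.sqrt (2/π) := by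
          rw [Real.sqrt_eq_rpow, Real.div_rpow (by norm_num : (0:ℝ) ≤ 2) hπ.le,
            Real.rpow_neg hπ.le, div_eq_mul_inv]
          ring
  rw [e1, ← e2, ← hconst]
  ring

/-- Moments of the FNIG marginal `X(t) = σ G(t)^H Z`, written as an expectation
over the joint (product) law of the independent pair `(G(t), Z)`. -/
theorem fnig_abs_moment (σ α β t q H : ℝ) (hσ : 0 < σ) (hα : 0 < α) (hβ : 0 < β)
    (ht : 0 < t) (hq : 0 < q) (hH0 : 0 < H) (hH1 : H < 1) :
    (∫ y in Ioi (0:ℝ), (∫ z : ℝ,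
        |σ * y ^ H * z| ^ q * ((2 * π) ^ (-(1:ℝ)/2) * Real.exp (-z^2 / 2)))
          * igPdf (α * t) β y)
      = (Real.sqrt (2 ^ q / π) * σ ^ q * Real.Gamma ((1 + q) / 2))
          * Real.sqrt (2 / π) * α * (α / β) ^ (q * H - 1/2) * t ^ (q * H + 1/2)
          * Real.exp (α * β * t) * besselK (1/2 - q * H) (α * β * t) := by
  have hat : (0:ℝ) < α * t := mul_pos hα ht
  have hstep : (∫ y in Ioi (0:ℝ), (∫ z : ℝ,
        |σ * y ^ H * z| ^ q * ((2 * π) ^ (-(1:ℝ)/2) * Real.exp (-z^2 / 2)))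
          * igPdf (α * t) β y)
      = (σ ^ q * (Real.sqrt (2 ^ q / π) * Real.Gamma ((1 + q) / 2)))
          * ∫ y in Ioi (0:ℝ), y ^ (q * H) * igPdf (α * t) β y := by
    rw [← integral_const_mul]
    refine setIntegral_congr_fun measurableSet_Ioi fun y hy => ?_
    have hy0 : (0:ℝ) < y := hy
    have hyH : (0:ℝ) < y ^ H := Real.rpow_pos_of_pos hy0 H
    have hinner : (∫ z : ℝ, |σ * y ^ H * z| ^ q
          * ((2 * π) ^ (-(1:ℝ)/2) * Real.exp (-z^2 / 2)))
        = (σ ^ q * y ^ (q * H)) * ∫ z : ℝ,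
            |z| ^ q * ((2 * π) ^ (-(1:ℝ)/2) * Real.exp (-z^2 / 2)) := by
      rw [← integral_const_mul]
      congr 1; ext z
      have h1 : |σ * y ^ H * z| = (σ * y ^ H) * |z| := by
        rw [abs_mul, abs_of_pos (mul_pos hσ hyH)]
      rw [h1, Real.mul_rpow (mul_pos hσ hyH).le (abs_nonneg z),
        Real.mul_rpow hσ.le hyH.le, ← Real.rpow_mul hy0.le,
        show H * q = q * H by ring]
      ring
    rw [hinner, gauss_abs_moment q hq]
    ring
  rw [hstep, ig_moment (α * t) β (q * H) hat hβ]
  have h1 : (α * t) / β = (α / β) * t := by ring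
  have h2 : ((α / β) * t) ^ (q * H - 1/2)
      = (α / β) ^ (q * H - 1/2) * t ^ (q * H - 1/2) :=
    Real.mul_rpow (div_pos hα hβ).le ht.le
  have h3 : t ^ (q * H + 1/2) = t * t ^ (q * H - 1/2) := by
    rw [show q * H + 1/2 = 1 + (q * H - 1/2) by ring, Real.rpow_add ht, Real.rpow_one]
  rw [h1, h2, h3, show α * t * β = α * β * t by ring]
  ring
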